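/- arXiv:2106.11157 — 6 statements merged into one kernel-verified Lean document; each statement's English description precedes it below -/
import Mathlib

section
/- The plane wave q(x,t) = c·e^{i(ax+bt)} with b = -a c² + a² satisfies the reverse-space-time derivative nonlinear Schrödinger equation i q_t - q_{xx} + i (q² q(-x,-t))_x = 0. -/
open Complex

lemma hasDerivAt_exp_lin (α β : ℂ) (x : ℝ) :
    HasDerivAt (fun y : ℝ => Complex.exp (α * y + β)) (α * Complex.exp (α * x + β)) x := by
  have h1 : HasDerivAt (fun y : ℝ => (y : ℂ)) 1 x := Complex.ofRealCLM.hasDerivAt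
  have h2 := (h1.const_mul α).add_const β
  simpa [mul_comm] using h2.cexp

/-- The plane wave `q(x,t) = c·e^{i(ax+bt)}` with `b = -a c² + a²` satisfies the
reverse-space-time derivative nonlinear Schrödinger equation
`i q_t - q_xx + i (q² q(-x,-t))_x = 0`. -/
theorem planeWave_solves_rst_dnls (a c b : ℝ) (hb : b = -a * c ^ 2 + a ^ 2)
    (q : ℝ → ℝ → ℂ)
    (hq : ∀ x t : ℝ, q x t = (c : ℂ) * Complex.exp (Complex.I * ((a : ℂ) * x + (b : ℂ) * t))) :
    ∀ x t : ℝ,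
      Complex.I * deriv (fun t' : ℝ => q x t') t
        - deriv (fun x' : ℝ => deriv (fun x'' : ℝ => q x'' t) x') x
        + Complex.I * deriv (fun x' : ℝ => (q x' t) ^ 2 * q (-x') (-t)) x = 0 := by
  intro x t
  set E : ℂ := Complex.exp (Complex.I * (a : ℂ) * x + Complex.I * (b : ℂ) * t) with hE
  -- time derivative
  have et : (fun t' : ℝ => q x t')
      = fun t' : ℝ => (c : ℂ) * Complex.exp ((Complex.I * b) * t' + Complex.I * a * x) := by
    funext t'; rw [hq]; congr 1; congr 1; ring
  have dt : deriv (fun t' : ℝ => q x t') t = (c : ℂ) * (Complex.I * b * E) := by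
    rw [et, ((hasDerivAt_exp_lin (Complex.I * b) (Complex.I * a * x) t).const_mul
      (c : ℂ)).deriv, hE, add_comm (Complex.I * (b:ℂ) * t)]
  -- inner space derivative (as a function)
  have ex : ∀ x' : ℝ, (fun x'' : ℝ => q x'' t)
      = fun x'' : ℝ => (c : ℂ) * Complex.exp ((Complex.I * a) * x'' + Complex.I * b * t) := by
    intro x'; funext x''; rw [hq]; congr 1; congr 1; ring
  have dx1 : ∀ x' : ℝ, deriv (fun x'' : ℝ => q x'' t) x'
      = (c : ℂ) * (Complex.I * a) * Complex.exp ((Complex.I * a) * x' + Complex.I * b * t) := by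
    intro x'
    rw [ex x', ((hasDerivAt_exp_lin (Complex.I * a) (Complex.I * b * t) x').const_mul
      (c : ℂ)).deriv]
    ring
  have dx2 : deriv (fun x' : ℝ => deriv (fun x'' : ℝ => q x'' t) x') x
      = (c : ℂ) * (Complex.I * a) * ((Complex.I * a) * E) := by
    have : (fun x' : ℝ => deriv (fun x'' : ℝ => q x'' t) x')
        = fun x' : ℝ => (c : ℂ) * (Complex.I * a)
            * Complex.exp ((Complex.I * a) * x' + Complex.I * b * t) := by
      funext x'; exact dx1 x'
    rw [this, ((hasDerivAt_exp_lin (Complex.I * a) (Complex.I * b * t) x).const_mul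
      ((c : ℂ) * (Complex.I * a))).deriv, hE]
  -- nonlinear term
  have en : (fun x' : ℝ => (q x' t) ^ 2 * q (-x') (-t))
      = fun x' : ℝ => (c : ℂ) ^ 3 * Complex.exp ((Complex.I * a) * x' + Complex.I * b * t) := by
    funext x'
    rw [hq, hq, mul_pow, ← Complex.exp_nat_mul, mul_mul_mul_comm, ← Complex.exp_add]
    push_cast
    rw [show (2:ℂ) * (Complex.I * ((a:ℂ) * x' + (b:ℂ) * t))
        + Complex.I * ((a:ℂ) * (-x') + (b:ℂ) * (-t))
        = Complex.I * (a:ℂ) * x' + Complex.I * (b:ℂ) * t from by ring]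
    ring
  have dn : deriv (fun x' : ℝ => (q x' t) ^ 2 * q (-x') (-t)) x
      = (c : ℂ) ^ 3 * ((Complex.I * a) * E) := by
    rw [en, ((hasDerivAt_exp_lin (Complex.I * a) (Complex.I * b * t) x).const_mul
      ((c : ℂ) ^ 3)).deriv, hE]
  rw [dt, dx2, dn]
  have hbC : (b : ℂ) = -(a : ℂ) * (c : ℂ) ^ 2 + (a : ℂ) ^ 2 := by
    rw [hb]; push_cast; ring
  have hI : (Complex.I) ^ 2 = -1 := Complex.I_sq
  linear_combination (-(c : ℂ) * E) * hbC
    + ((c : ℂ) * (b : ℂ) * E - (c : ℂ) * (a : ℂ) ^ 2 * E + (c : ℂ) ^ 3 * (a : ℂ) * E) * hI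
end

section
/- For the x-part of the Lax pair Ψ_x = (iσλ² + Qλ)Ψ with plane wave potential q = c·e^{i(ax+bt)}, q(-x,-t) = c·e^{-i(ax+bt)}, b = a² - ac², the vector Ψ₁ with components φ = e^{tR(-c²+2λ²+a)/2 + xR/2 + i(ax+bt)/2} and ψ = ((ia - 2iλ² + R)/(2cλ))·e^{tR(-c²+2λ²+a)/2 + xR/2 - i(ax+bt)/2}, where R = √(-4c²λ² - 4λ⁴ + 4aλ² - a²), satisfies Ψ_x = UΨ. -/
/-!
Conjugating by the phase `diag(e^{iθ/2}, e^{-iθ/2})`, `θ = ax + bt`, turns the x-part of the Lax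
pair into a constant-coefficient system `Φ_x = M Φ` with
`M = [[i(λ² - a/2), cλ], [-cλ, -i(λ² - a/2)]]`. Since `det M = (λ² - a/2)² + c²λ² = -(R/2)²`,
the vector `(1, K)` with `K = (ia - 2iλ² + R)/(2cλ)` is an eigenvector of `M` for the eigenvalue
`R/2`, so `e^{xR/2}(1, K)` (times any function of `t`) solves it.
-/

open Complex

theorem hasDerivAt_cexp_mul_ofReal_add (p q : ℂ) (x : ℝ) :
    HasDerivAt (fun y : ℝ => cexp (p * y + q)) (p * cexp (p * x + q)) x := by
  simpa [mul_comm] using ((((hasDerivAt_id x).ofReal_comp).const_mul p).add_const q).cexp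

theorem planeWave_eigenvector {a c lam R : ℂ} (hc : c ≠ 0) (hlam : lam ≠ 0)
    (hR : R ^ 2 = -4 * c ^ 2 * lam ^ 2 - 4 * lam ^ 4 + 4 * a * lam ^ 2 - a ^ 2) :
    let K := (I * a - 2 * I * lam ^ 2 + R) / (2 * c * lam)
    I * lam ^ 2 - I * a / 2 + lam * c * K = R / 2 ∧
      -(lam * c) - (I * lam ^ 2 - I * a / 2) * K = R / 2 * K := by
  refine ⟨by field_simp; ring, ?_⟩
  field_simp
  linear_combination -hR + (2 * lam ^ 2 - a) ^ 2 * I_sq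

theorem hasDerivAt_laxX_planeWave {lam c ω μ q₁ q₂ K : ℂ} {φ ψ : ℝ → ℂ}
    (hφ : ∀ x, φ x = cexp ((μ + ω) * x + q₁)) (hψ : ∀ x, ψ x = K * cexp ((μ - ω) * x + q₂))
    (h₁ : I * lam ^ 2 - ω + lam * c * K = μ)
    (h₂ : -(lam * c) - (I * lam ^ 2 - ω) * K = μ * K) (x : ℝ) :
    HasDerivAt φ (I * lam ^ 2 * φ x + lam * (c * cexp (2 * ω * x + (q₁ - q₂))) * ψ x) x ∧
      HasDerivAt ψ
        (-(I * lam ^ 2) * ψ x + lam * (-(c * cexp (-(2 * ω * x + (q₁ - q₂))))) * φ x) x := by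
  obtain rfl : φ = _ := funext hφ
  obtain rfl : ψ = _ := funext hψ
  have hup : cexp (2 * ω * x + (q₁ - q₂)) * cexp ((μ - ω) * x + q₂)
      = cexp ((μ + ω) * x + q₁) := by rw [← exp_add]; ring_nf
  have hdown : cexp (-(2 * ω * x + (q₁ - q₂))) * cexp ((μ + ω) * x + q₁)
      = cexp ((μ - ω) * x + q₂) := by rw [← exp_add]; ring_nf
  refine ⟨(hasDerivAt_cexp_mul_ofReal_add (μ + ω) q₁ x).congr_deriv ?_,
    ((hasDerivAt_cexp_mul_ofReal_add (μ - ω) q₂ x).const_mul K).congr_deriv ?_⟩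
  · linear_combination -(cexp ((μ + ω) * x + q₁) * h₁) - lam * c * K * hup
  · linear_combination lam * c * hdown - cexp ((μ - ω) * x + q₂) * h₂

theorem explicit_eigenfunction_x_part_general (a c : ℝ) (hc : c ≠ 0) (lam : ℂ) (hlam : lam ≠ 0)
    (b : ℝ) (R : ℂ)
    (hR : R ^ 2 = -4 * (c : ℂ) ^ 2 * lam ^ 2 - 4 * lam ^ 4 + 4 * (a : ℂ) * lam ^ 2 - (a : ℂ) ^ 2)
    (φ ψ : ℝ → ℝ → ℂ)
    (hφ : ∀ x t : ℝ, φ x t =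
      Complex.exp ((t : ℂ) * R * (-(c : ℂ) ^ 2 + 2 * lam ^ 2 + (a : ℂ)) / 2
        + (x : ℂ) * R / 2 + Complex.I * ((a : ℂ) * x + (b : ℂ) * t) / 2))
    (hψ : ∀ x t : ℝ, ψ x t =
      (Complex.I * (a : ℂ) - 2 * Complex.I * lam ^ 2 + R) / (2 * (c : ℂ) * lam) *
      Complex.exp ((t : ℂ) * R * (-(c : ℂ) ^ 2 + 2 * lam ^ 2 + (a : ℂ)) / 2
        + (x : ℂ) * R / 2 - Complex.I * ((a : ℂ) * x + (b : ℂ) * t) / 2)) :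
    ∀ x t : ℝ,
      deriv (fun x' : ℝ => φ x' t) x
        = Complex.I * lam ^ 2 * φ x t
          + lam * ((c : ℂ) * Complex.exp (Complex.I * ((a : ℂ) * x + (b : ℂ) * t))) * ψ x t ∧
      deriv (fun x' : ℝ => ψ x' t) x
        = -(Complex.I * lam ^ 2) * ψ x t
          + lam * (-((c : ℂ) * Complex.exp (-(Complex.I * ((a : ℂ) * x + (b : ℂ) * t))))) * φ x t := by
  intro x t
  obtain ⟨h₁, h₂⟩ := planeWave_eigenvector (a := a) (ofReal_ne_zero.mpr hc) hlam hR
  set e : ℂ := t * R * (-(c : ℂ) ^ 2 + 2 * lam ^ 2 + a) / 2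
  have hphase : I * (a * x + b * t)
      = 2 * (I * a / 2) * x + ((e + I * b * t / 2) - (e - I * b * t / 2)) := by ring
  obtain ⟨hφ', hψ'⟩ := hasDerivAt_laxX_planeWave (φ := fun x' => φ x' t) (ψ := fun x' => ψ x' t)
    (q₁ := e + I * b * t / 2) (q₂ := e - I * b * t / 2)
    (fun x' => by rw [hφ]; congr 1; ring) (fun x' => by rw [hψ]; congr 2; ring) h₁ h₂ x
  rw [hphase]
  exact ⟨hφ'.deriv, hψ'.deriv⟩

/-- The explicit vector with components
`φ = e^{tR(-c²+2λ²+a)/2 + xR/2 + i(ax+bt)/2}` and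
`ψ = ((ia - 2iλ² + R)/(2cλ))·e^{tR(-c²+2λ²+a)/2 + xR/2 - i(ax+bt)/2}`
satisfies the x-part of the Lax pair `Ψ_x = (iσλ² + Qλ)Ψ` for the plane wave
potential `q = c e^{i(ax+bt)}`, `q(-x,-t) = c e^{-i(ax+bt)}`, `b = a² - ac²`,
where `R² = -4c²λ² - 4λ⁴ + 4aλ² - a²`. -/
theorem explicit_eigenfunction_x_part (a c : ℝ) (hc : c ≠ 0) (lam : ℂ) (hlam : lam ≠ 0)
    (b : ℝ) (hb : b = a ^ 2 - a * c ^ 2) (R : ℂ)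
    (hR : R ^ 2 = -4 * (c : ℂ) ^ 2 * lam ^ 2 - 4 * lam ^ 4 + 4 * (a : ℂ) * lam ^ 2 - (a : ℂ) ^ 2)
    (φ ψ : ℝ → ℝ → ℂ)
    (hφ : ∀ x t : ℝ, φ x t =
      Complex.exp ((t : ℂ) * R * (-(c : ℂ) ^ 2 + 2 * lam ^ 2 + (a : ℂ)) / 2
        + (x : ℂ) * R / 2 + Complex.I * ((a : ℂ) * x + (b : ℂ) * t) / 2))
    (hψ : ∀ x t : ℝ, ψ x t =
      (Complex.I * (a : ℂ) - 2 * Complex.I * lam ^ 2 + R) / (2 * (c : ℂ) * lam) *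
      Complex.exp ((t : ℂ) * R * (-(c : ℂ) ^ 2 + 2 * lam ^ 2 + (a : ℂ)) / 2
        + (x : ℂ) * R / 2 - Complex.I * ((a : ℂ) * x + (b : ℂ) * t) / 2)) :
    ∀ x t : ℝ,
      deriv (fun x' : ℝ => φ x' t) x
        = Complex.I * lam ^ 2 * φ x t
          + lam * ((c : ℂ) * Complex.exp (Complex.I * ((a : ℂ) * x + (b : ℂ) * t))) * ψ x t ∧
      deriv (fun x' : ℝ => ψ x' t) x
        = -(Complex.I * lam ^ 2) * ψ x t
          + lam * (-((c : ℂ) * Complex.exp (-(Complex.I * ((a : ℂ) * x + (b : ℂ) * t))))) * φ x t :=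
  explicit_eigenfunction_x_part_general a c hc lam hlam b R hR φ ψ hφ hψ
end

section
/- If the Darboux matrix T = A₁λ + A₀ with constant-in-λ matrix coefficients A₁ = [[a₁,b₁],[c₁,d₁]], A₀ satisfies T_x = U¹T - TU where U = iσλ² + Qλ, U¹ = iσλ² + Q¹λ (as polynomials in λ), then comparing the λ³ coefficient forces b₁ = c₁ = 0, and the λ² coefficient gives the one-fold Darboux transformation formula q¹·d₁ = a₁·q - 2i·b₀, where b₀ = (A₀)₁₂. -/
open Complex Matrix

noncomputable section

def sigmaM : Matrix (Fin 2) (Fin 2) ℂ := !![1, 0; 0, -1]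

def Qmat (q r : ℝ → ℝ → ℂ) (x t : ℝ) : Matrix (Fin 2) (Fin 2) ℂ :=
  !![0, q x t; -(r x t), 0]

def Umat (q r : ℝ → ℝ → ℂ) (lam : ℂ) (x t : ℝ) : Matrix (Fin 2) (Fin 2) ℂ :=
  (Complex.I * lam ^ 2) • sigmaM + lam • Qmat q r x t

/-- The Darboux matrix `T = A₁λ + A₀` with `A₁ = [[a₁,b₁],[c₁,d₁]]` a matrix of functions
of `(x,t)` and `A₀` a constant matrix. -/
def Tmat (a₁ b₁ c₁ d₁ : ℝ → ℝ → ℂ) (A₀ : Matrix (Fin 2) (Fin 2) ℂ) (lam : ℂ) (x t : ℝ) :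
    Matrix (Fin 2) (Fin 2) ℂ :=
  lam • !![a₁ x t, b₁ x t; c₁ x t, d₁ x t] + A₀

lemma deriv_lin' (lam c : ℂ) (f : ℝ → ℂ) (x : ℝ) :
    deriv (fun x' => lam * f x' + c) x = lam * deriv f x := by
  rw [deriv_add_const, deriv_const_mul_field]

/-- If the Darboux matrix `T = A₁λ + A₀` satisfies `T_x = U¹T - TU` identically in λ,
then the λ³ coefficient forces `b₁ = c₁ = 0`, and the λ² coefficient gives the one-fold
Darboux transformation formula `q¹ d₁ = a₁ q - 2i b₀` with `b₀ = (A₀)₁₂`. -/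
theorem one_fold_darboux (q r q₁ r₁ a₁ b₁ c₁ d₁ : ℝ → ℝ → ℂ)
    (A₀ : Matrix (Fin 2) (Fin 2) ℂ)
    (hT : ∀ (lam : ℂ) (x t : ℝ),
      (Matrix.of fun i j => deriv (fun x' => Tmat a₁ b₁ c₁ d₁ A₀ lam x' t i j) x)
        = Umat q₁ r₁ lam x t * Tmat a₁ b₁ c₁ d₁ A₀ lam x t
          - Tmat a₁ b₁ c₁ d₁ A₀ lam x t * Umat q r lam x t) :
    (∀ x t : ℝ, b₁ x t = 0 ∧ c₁ x t = 0) ∧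
    (∀ x t : ℝ, q₁ x t * d₁ x t = a₁ x t * q x t - 2 * Complex.I * A₀ 0 1) := by
  have h01 : ∀ (lam : ℂ) (x t : ℝ),
      lam * deriv (fun x' => b₁ x' t) x =
      (Complex.I * lam ^ 2 * 1 + lam * 0) * (lam * b₁ x t + A₀ 0 1) +
        (Complex.I * lam ^ 2 * 0 + lam * q₁ x t) * (lam * d₁ x t + A₀ 1 1) -
      ((lam * a₁ x t + A₀ 0 0) * (Complex.I * lam ^ 2 * 0 + lam * q x t) +
        (lam * b₁ x t + A₀ 0 1) * (Complex.I * lam ^ 2 * -1 + lam * 0)) := by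
    intro lam x t
    have h := congrFun (congrFun (hT lam x t) 0) 1
    simp only [Tmat, Umat, Qmat, sigmaM, Matrix.of_apply, Matrix.add_apply, Matrix.smul_apply,
      Matrix.sub_apply, Matrix.mul_apply, Fin.sum_univ_two, Matrix.cons_val', Matrix.cons_val_zero,
      Matrix.cons_val_one, Matrix.head_cons, Matrix.head_fin_const, Matrix.empty_val',
      Matrix.cons_val_fin_one, smul_eq_mul] at h
    rwa [deriv_lin'] at h
  have h10 : ∀ (lam : ℂ) (x t : ℝ),
      lam * deriv (fun x' => c₁ x' t) x =
      (Complex.I * lam ^ 2 * 0 + lam * -(r₁ x t)) * (lam * a₁ x t + A₀ 0 0) +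
        (Complex.I * lam ^ 2 * -1 + lam * 0) * (lam * c₁ x t + A₀ 1 0) -
      ((lam * c₁ x t + A₀ 1 0) * (Complex.I * lam ^ 2 * 1 + lam * 0) +
        (lam * d₁ x t + A₀ 1 1) * (Complex.I * lam ^ 2 * 0 + lam * -(r x t))) := by
    intro lam x t
    have h := congrFun (congrFun (hT lam x t) 1) 0
    simp only [Tmat, Umat, Qmat, sigmaM, Matrix.of_apply, Matrix.add_apply, Matrix.smul_apply,
      Matrix.sub_apply, Matrix.mul_apply, Fin.sum_univ_two, Matrix.cons_val', Matrix.cons_val_zero,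
      Matrix.cons_val_one, Matrix.head_cons, Matrix.head_fin_const, Matrix.empty_val',
      Matrix.cons_val_fin_one, smul_eq_mul] at h
    rwa [deriv_lin'] at h
  constructor
  · intro x t
    constructor
    · have hb : 2 * Complex.I * b₁ x t = 0 := by
        linear_combination -(h01 2 x t - 2 * h01 1 x t - (h01 1 x t + h01 (-1) x t)) / 6
      simpa [Complex.I_ne_zero] using hb
    · have hc : 2 * Complex.I * c₁ x t = 0 := by
        linear_combination (h10 2 x t - 2 * h10 1 x t - (h10 1 x t + h10 (-1) x t)) / 6
      simpa [Complex.I_ne_zero] using hc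
  · intro x t
    linear_combination -(h01 1 x t + h01 (-1) x t) / 2

end
end

section
/- The maximum over (x,t) ∈ ℝ² of the rational rogue wave intensity |q_r|² = (m₁t⁴+m₂t³+m₃t²+m₄t+m₅)/(m₆t⁴+m₇t³+m₈t²+m₉t+m₁₀) is attained at (x,t) = (0,0), where it equals 36β₁², which is 9 times the background intensity 4β₁². -/
noncomputable section

/-- Coefficients of the rational rogue wave intensity `|q_r|²` (numerator). -/
def m1 (α β : ℝ) : ℝ := 262144 * (α ^ 12 * β ^ 6 + 2 * α ^ 6 * β ^ 12 + β ^ 18)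

def m2 (α β x : ℝ) : ℝ :=
  262144 * (α ^ 10 * β ^ 6 - α ^ 6 * β ^ 10 + α ^ 4 * β ^ 12 - β ^ 16) * x

def m3 (α β x : ℝ) : ℝ :=
  32768 * (3 * α ^ 8 * β ^ 6 + α ^ 6 * β ^ 8 - 4 * α ^ 4 * β ^ 10 + α ^ 2 * β ^ 12
      + 3 * β ^ 14) * x ^ 2
    - 6144 * (α ^ 6 * β ^ 4 - 6 * α ^ 4 * β ^ 6 + β ^ 10)

def m4 (α β x : ℝ) : ℝ :=
  16384 * (α ^ 6 * β ^ 6 + α ^ 4 * β ^ 8 - α ^ 2 * β ^ 10 - β ^ 12) * x ^ 3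
    + 3072 * (2 * α ^ 2 * β ^ 6 + β ^ 8 - α ^ 4 * β ^ 4) * x

def m5 (α β x : ℝ) : ℝ :=
  1024 * (α ^ 4 * β ^ 6 + 2 * α ^ 2 * β ^ 8 + β ^ 10) * x ^ 4
    - 128 * (3 * α ^ 2 * β ^ 4 + β ^ 6) * x ^ 2 + 36 * β ^ 2

/-- Coefficients of the rational rogue wave intensity `|q_r|²` (denominator). -/
def m6 (α β : ℝ) : ℝ := 65536 * (α ^ 12 * β ^ 4 + 2 * α ^ 6 * β ^ 10 + β ^ 16)

def m7 (α β x : ℝ) : ℝ :=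
  65536 * (α ^ 10 * β ^ 4 - α ^ 6 * β ^ 8 + α ^ 4 * β ^ 10 - β ^ 14) * x

def m8 (α β x : ℝ) : ℝ :=
  8192 * (3 * α ^ 8 * β ^ 4 + α ^ 6 * β ^ 6 - 4 * α ^ 4 * β ^ 8 + α ^ 2 * β ^ 10
      + 3 * β ^ 12) * x ^ 2
    + 512 * (α ^ 6 * β ^ 2 + 2 * α ^ 4 * β ^ 4 - 8 * α ^ 2 * β ^ 6 + 9 * β ^ 8)

def m9 (α β x : ℝ) : ℝ :=
  4096 * (α ^ 6 * β ^ 4 + α ^ 4 * β ^ 6 - α ^ 2 * β ^ 8 - β ^ 10) * x ^ 3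
    + 256 * (α ^ 4 * β ^ 2 + 2 * α ^ 2 * β ^ 4 - 5 * β ^ 6) * x

def m10 (α β x : ℝ) : ℝ :=
  256 * (α ^ 4 * β ^ 4 + 2 * α ^ 2 * β ^ 6 + β ^ 8) * x ^ 4
    + 32 * (α ^ 2 * β ^ 2 + 3 * β ^ 4) * x ^ 2 + 1

/-- Numerator of `|q_r|²`. -/
def rwNum (α β x t : ℝ) : ℝ :=
  m1 α β * t ^ 4 + m2 α β x * t ^ 3 + m3 α β x * t ^ 2 + m4 α β x * t + m5 α β x

/-- Denominator of `|q_r|²`. -/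
def rwDen (α β x t : ℝ) : ℝ :=
  m6 α β * t ^ 4 + m7 α β x * t ^ 3 + m8 α β x * t ^ 2 + m9 α β x * t + m10 α β x

/-- The rational first-order rogue wave intensity `|q_r(x,t)|²`. -/
def rwIntensity (α β x t : ℝ) : ℝ := rwNum α β x t / rwDen α β x t

/-- The maximum of the rogue wave intensity over `ℝ²` is attained at the origin,
where it equals `36β₁²`, nine times the background intensity `4β₁²`. -/
theorem rogue_wave_max_at_origin (α₁ β₁ : ℝ) (hβ : β₁ > 0) (hα : α₁ ≠ 0) :
    rwIntensity α₁ β₁ 0 0 = 36 * β₁ ^ 2 ∧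
    (∀ x t : ℝ, rwIntensity α₁ β₁ x t ≤ 36 * β₁ ^ 2) ∧
    (36 : ℝ) * β₁ ^ 2 = 9 * (4 * β₁ ^ 2) := by
  have hc : (0:ℝ) < α₁ ^ 2 + 3 * β₁ ^ 2 := by positivity
  have hc7 : (0:ℝ) < 3 * α₁ ^ 2 + 7 * β₁ ^ 2 := by positivity
  -- denominator positivity
  have hden : ∀ x t : ℝ, 0 < rwDen α₁ β₁ x t := by
    intro x t
    have hkey : (α₁ ^ 2 + 3 * β₁ ^ 2) * rwDen α₁ β₁ x t =
        (α₁ ^ 2 + 3 * β₁ ^ 2) *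
          ((256 * β₁ ^ 2 * (α₁ ^ 6 + β₁ ^ 6) * t ^ 2
            + 128 * β₁ ^ 2 * (α₁ ^ 4 - β₁ ^ 4) * x * t
            + 16 * β₁ ^ 2 * (α₁ ^ 2 + β₁ ^ 2) * x ^ 2) ^ 2 + 1)
        + 32 * β₁ ^ 2 * ((α₁ ^ 2 + 3 * β₁ ^ 2) * x
            + 4 * (α₁ ^ 4 + 2 * α₁ ^ 2 * β₁ ^ 2 - 5 * β₁ ^ 4) * t) ^ 2
        + 512 * β₁ ^ 4 * (α₁ ^ 2 + β₁ ^ 2) ^ 2 * (α₁ ^ 2 + 2 * β₁ ^ 2) * t ^ 2 := by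
      simp only [rwDen, m6, m7, m8, m9, m10]; ring
    have hP : 0 < (α₁ ^ 2 + 3 * β₁ ^ 2) * rwDen α₁ β₁ x t := by
      rw [hkey]
      have h1 : 0 < (α₁ ^ 2 + 3 * β₁ ^ 2) *
          ((256 * β₁ ^ 2 * (α₁ ^ 6 + β₁ ^ 6) * t ^ 2
            + 128 * β₁ ^ 2 * (α₁ ^ 4 - β₁ ^ 4) * x * t
            + 16 * β₁ ^ 2 * (α₁ ^ 2 + β₁ ^ 2) * x ^ 2) ^ 2 + 1) :=
        mul_pos hc (by positivity)
      have h2 : 0 ≤ 32 * β₁ ^ 2 * ((α₁ ^ 2 + 3 * β₁ ^ 2) * x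
            + 4 * (α₁ ^ 4 + 2 * α₁ ^ 2 * β₁ ^ 2 - 5 * β₁ ^ 4) * t) ^ 2 := by positivity
      have h3 : 0 ≤ 512 * β₁ ^ 4 * (α₁ ^ 2 + β₁ ^ 2) ^ 2 * (α₁ ^ 2 + 2 * β₁ ^ 2) * t ^ 2 := by
        positivity
      linarith
    nlinarith [hP, hc]
  refine ⟨?_, ?_, by ring⟩
  · simp only [rwIntensity, rwNum, rwDen, m1, m2, m3, m4, m5, m6, m7, m8, m9, m10]
    norm_num
  · intro x t
    have hd := hden x t
    rw [rwIntensity, div_le_iff₀ hd]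
    have hkey : (3 * α₁ ^ 2 + 7 * β₁ ^ 2) *
        (36 * β₁ ^ 2 * rwDen α₁ β₁ x t - rwNum α₁ β₁ x t) =
        512 * β₁ ^ 4 * ((3 * α₁ ^ 2 + 7 * β₁ ^ 2) * x
            + 12 * (α₁ ^ 4 + α₁ ^ 2 * β₁ ^ 2 - 4 * β₁ ^ 4) * t) ^ 2
        + 24576 * β₁ ^ 6 * (α₁ ^ 2 + β₁ ^ 2) ^ 3 * t ^ 2
        + 8192 * β₁ ^ 6 * (3 * α₁ ^ 2 + 7 * β₁ ^ 2) *
            ((α₁ ^ 2 + β₁ ^ 2) * x ^ 2 + 8 * (α₁ ^ 4 - β₁ ^ 4) * x * t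
              + 16 * (α₁ ^ 6 + β₁ ^ 6) * t ^ 2) ^ 2 := by
      simp only [rwNum, rwDen, m1, m2, m3, m4, m5, m6, m7, m8, m9, m10]; ring
    have hP : 0 ≤ (3 * α₁ ^ 2 + 7 * β₁ ^ 2) *
        (36 * β₁ ^ 2 * rwDen α₁ β₁ x t - rwNum α₁ β₁ x t) := by
      rw [hkey]; positivity
    nlinarith [hP, hc7]

end
end

section
/- The minimum of the first-order rogue wave intensity |q_r|², attained on the trajectory at the two symmetric points (x₀, t₀) and (-x₀, -t₀) with x₀ = √(27α₁⁴/(16β₁²(4α₁²+β₁²)(α₁²+β₁²)²)) and t₀ = √(3/(256β₁²(4α₁²+β₁²)(α₁²+β₁²)²)), equals 108(3α₁⁴ - 2α₁²β₁² + 4β₁⁴)α₁⁴β₁² / (169α₁⁸ - 56α₁⁶β₁² + 6α₁⁴β₁⁴ - 8α₁²β₁⁶ + 4β₁⁸). -/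
noncomputable section

set_option maxHeartbeats 4000000

/-- Evaluation of the rogue wave intensity at the minimum points
`(x₀, t₀)` and `(-x₀, -t₀)`. -/
theorem rogue_wave_min_value (α₁ β₁ : ℝ) (hα : α₁ ≠ 0) (hβ : β₁ > 0) :
    let x₀ := Real.sqrt (27 * α₁ ^ 4 /
      (16 * β₁ ^ 2 * (4 * α₁ ^ 2 + β₁ ^ 2) * (α₁ ^ 2 + β₁ ^ 2) ^ 2))
    let t₀ := Real.sqrt (3 /
      (256 * β₁ ^ 2 * (4 * α₁ ^ 2 + β₁ ^ 2) * (α₁ ^ 2 + β₁ ^ 2) ^ 2))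
    rwIntensity α₁ β₁ x₀ t₀
        = 108 * (3 * α₁ ^ 4 - 2 * α₁ ^ 2 * β₁ ^ 2 + 4 * β₁ ^ 4) * α₁ ^ 4 * β₁ ^ 2 /
          (169 * α₁ ^ 8 - 56 * α₁ ^ 6 * β₁ ^ 2 + 6 * α₁ ^ 4 * β₁ ^ 4
            - 8 * α₁ ^ 2 * β₁ ^ 6 + 4 * β₁ ^ 8) ∧
    rwIntensity α₁ β₁ (-x₀) (-t₀)
        = 108 * (3 * α₁ ^ 4 - 2 * α₁ ^ 2 * β₁ ^ 2 + 4 * β₁ ^ 4) * α₁ ^ 4 * β₁ ^ 2 /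
          (169 * α₁ ^ 8 - 56 * α₁ ^ 6 * β₁ ^ 2 + 6 * α₁ ^ 4 * β₁ ^ 4
            - 8 * α₁ ^ 2 * β₁ ^ 6 + 4 * β₁ ^ 8) := by
  intro x₀ t₀
  have hα2 : (0:ℝ) < α₁ ^ 2 := by positivity
  have hD : (0:ℝ) < 256 * β₁ ^ 2 * (4 * α₁ ^ 2 + β₁ ^ 2) * (α₁ ^ 2 + β₁ ^ 2) ^ 2 := by
    positivity
  have ht2 : t₀ ^ 2 = 3 / (256 * β₁ ^ 2 * (4 * α₁ ^ 2 + β₁ ^ 2) * (α₁ ^ 2 + β₁ ^ 2) ^ 2) :=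
    Real.sq_sqrt (by positivity)
  have hx : x₀ = 12 * α₁ ^ 2 * t₀ := by
    show Real.sqrt _ = _
    rw [show 27 * α₁ ^ 4 / (16 * β₁ ^ 2 * (4 * α₁ ^ 2 + β₁ ^ 2) * (α₁ ^ 2 + β₁ ^ 2) ^ 2)
        = (12 * α₁ ^ 2) ^ 2 *
          (3 / (256 * β₁ ^ 2 * (4 * α₁ ^ 2 + β₁ ^ 2) * (α₁ ^ 2 + β₁ ^ 2) ^ 2)) by
      field_simp; ring]
    rw [Real.sqrt_mul (by positivity), Real.sqrt_sq (by positivity)]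
  have h4 : t₀ ^ 4
      = (3 / (256 * β₁ ^ 2 * (4 * α₁ ^ 2 + β₁ ^ 2) * (α₁ ^ 2 + β₁ ^ 2) ^ 2)) ^ 2 := by
    rw [← ht2]; ring
  have hRden : (0:ℝ) < 169 * α₁ ^ 8 - 56 * α₁ ^ 6 * β₁ ^ 2 + 6 * α₁ ^ 4 * β₁ ^ 4
      - 8 * α₁ ^ 2 * β₁ ^ 6 + 4 * β₁ ^ 8 := by
    nlinarith [sq_nonneg (13 * α₁ ^ 4 - 3 * α₁ ^ 2 * β₁ ^ 2), sq_nonneg (α₁ ^ 2 * β₁ ^ 2 - 2 * β₁ ^ 4),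
      sq_nonneg (α₁ ^ 2 * β₁ ^ 2 - β₁ ^ 4), mul_pos (pow_pos hα2 2) (pow_pos (pow_pos hβ 2) 2),
      pow_pos hα2 4, pow_pos (pow_pos hβ 2) 4, sq_nonneg (α₁ ^ 4 - α₁ ^ 2 * β₁ ^ 2)]
  have hnum : rwNum α₁ β₁ x₀ t₀
      = 1048576 * β₁ ^ 4 * (α₁ ^ 2 + β₁ ^ 2) ^ 2 *
          (108 * (3 * α₁ ^ 4 - 2 * α₁ ^ 2 * β₁ ^ 2 + 4 * β₁ ^ 4) * α₁ ^ 4 * β₁ ^ 2) /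
        (256 * β₁ ^ 2 * (4 * α₁ ^ 2 + β₁ ^ 2) * (α₁ ^ 2 + β₁ ^ 2) ^ 2) ^ 2 := by
    rw [hx]
    unfold rwNum m1 m2 m3 m4 m5
    ring_nf
    rw [h4, ht2]
    field_simp
    ring
  have hden : rwDen α₁ β₁ x₀ t₀
      = 1048576 * β₁ ^ 4 * (α₁ ^ 2 + β₁ ^ 2) ^ 2 *
          (169 * α₁ ^ 8 - 56 * α₁ ^ 6 * β₁ ^ 2 + 6 * α₁ ^ 4 * β₁ ^ 4
            - 8 * α₁ ^ 2 * β₁ ^ 6 + 4 * β₁ ^ 8) /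
        (256 * β₁ ^ 2 * (4 * α₁ ^ 2 + β₁ ^ 2) * (α₁ ^ 2 + β₁ ^ 2) ^ 2) ^ 2 := by
    rw [hx]
    unfold rwDen m6 m7 m8 m9 m10
    ring_nf
    rw [h4, ht2]
    field_simp
    ring
  have hdenpos : (0:ℝ) < rwDen α₁ β₁ x₀ t₀ := by
    rw [hden]
    have hM : (0:ℝ) < 1048576 * β₁ ^ 4 * (α₁ ^ 2 + β₁ ^ 2) ^ 2 := by positivity
    exact div_pos (mul_pos hM hRden) (by positivity)
  have hmain : rwIntensity α₁ β₁ x₀ t₀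
      = 108 * (3 * α₁ ^ 4 - 2 * α₁ ^ 2 * β₁ ^ 2 + 4 * β₁ ^ 4) * α₁ ^ 4 * β₁ ^ 2 /
        (169 * α₁ ^ 8 - 56 * α₁ ^ 6 * β₁ ^ 2 + 6 * α₁ ^ 4 * β₁ ^ 4
          - 8 * α₁ ^ 2 * β₁ ^ 6 + 4 * β₁ ^ 8) := by
    rw [rwIntensity, div_eq_div_iff hdenpos.ne' hRden.ne', hnum, hden]
    field_simp
  refine ⟨hmain, ?_⟩
  have hsym : rwIntensity α₁ β₁ (-x₀) (-t₀) = rwIntensity α₁ β₁ x₀ t₀ := by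
    unfold rwIntensity rwNum rwDen m1 m2 m3 m4 m5 m6 m7 m8 m9 m10
    congr 1 <;> ring
  rw [hsym]; exact hmain

end
end

section
/- The denominator m₆t⁴ + m₇t³ + m₈t² + m₉t + m₁₀ of the rogue wave intensity is strictly positive for all (x,t) ∈ ℝ² whenever β₁ ≠ 0, hence |q_r|² is a well-defined smooth function on all of ℝ². -/
noncomputable section

/-- The denominator of the rogue wave intensity is strictly positive on all of `ℝ²`
whenever `β₁ ≠ 0`. -/
theorem rogue_wave_denominator_pos (α₁ β₁ : ℝ) (hβ : β₁ ≠ 0) :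
    ∀ x t : ℝ, 0 < rwDen α₁ β₁ x t := by
  intro x t
  set a := α₁ ^ 2 with ha
  set b := β₁ ^ 2 with hb
  have hb0 : 0 < b := by positivity
  have ha0 : 0 ≤ a := by positivity
  -- the PSD quadratic form
  have hQ : 0 ≤ 16 * (a ^ 3 + b ^ 3) * t ^ 2 + 8 * (a ^ 2 - b ^ 2) * x * t
      + (a + b) * x ^ 2 := by
    have hab : 0 < a ^ 3 + b ^ 3 := by positivity
    nlinarith [sq_nonneg (16 * (a ^ 3 + b ^ 3) * t + 4 * (a ^ 2 - b ^ 2) * x),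
      mul_nonneg (mul_nonneg (mul_nonneg ha0 hb0.le) (add_pos_of_nonneg_of_pos ha0 hb0).le)
        (sq_nonneg x)]
  set q : ℝ := 256 * b * (a ^ 3 + b ^ 3) * t ^ 2 + 128 * b * (a ^ 2 - b ^ 2) * x * t
      + 16 * b * (a + b) * x ^ 2 + 1 with hq
  have hq1 : 1 ≤ q := by
    have := mul_nonneg hb0.le hQ
    simp only [hq]; nlinarith
  have hiden : rwDen α₁ β₁ x t
      = q ^ 2 + 64 * b ^ 2 * (4 * (a - 2 * b) * t + x) ^ 2 := by
    simp only [rwDen, m6, m7, m8, m9, m10, hq, ha, hb]; ring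
  rw [hiden]
  nlinarith [sq_nonneg (4 * (a - 2 * b) * t + x), sq_nonneg b, hq1]


end
end
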